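/- arXiv:1502.00678 — 3 statements merged into one kernel-verified Lean document; each statement's English description precedes it below -/
import Mathlib

section
/- Let g ≥ 2 be an integer, and let X and Y be finite sets with |X| = n ≥ 3 and |Y| ≥ n(n−1)g − n + 2. Let f : Y → X^(2) be a function, where X^(2) denotes the set of 2-element subsets of X. Then there exists z ∈ X such that |f^{-1}((X \ {z})^(2))| ≥ (n−1)(n−2)g − n + 3, i.e. at least (n−1)(n−2)g − n + 3 elements of Y are mapped by f to 2-element subsets of X not containing z. -/
lemma arith_aux (g k m : ℕ) (hg : 2 ≤ g)
    (hm : (k + 3) * (k + 2) * g - (k + 3) + 2 ≤ m) :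
    (k + 3) * ((k + 2) * (k + 1) * g - (k + 3) + 3 - 1) < (k + 1) * m := by
  obtain ⟨j, rfl⟩ : ∃ j, g = j + 2 := ⟨g - 2, by omega⟩
  have h1 : (k + 3) ≤ (k + 2) * (k + 1) * (j + 2) := by nlinarith [Nat.zero_le (k * k), Nat.zero_le (k * j), Nat.zero_le (k * k * j)]
  have h2 : (k + 3) ≤ (k + 3) * (k + 2) * (j + 2) := by nlinarith [Nat.zero_le (k * k), Nat.zero_le (k * j), Nat.zero_le (k * k * j)]
  have e : (k + 2) * (k + 1) * (j + 2) - (k + 3) + 3 - 1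
      = (k + 2) * (k + 1) * (j + 2) - (k + 3) + 2 := by omega
  rw [e]
  zify [h1, h2] at *
  have hAB : ((k : ℤ) + 3) * ((k + 2) * (k + 1) * (j + 2))
      = (k + 1) * ((k + 3) * (k + 2) * (j + 2)) := by ring
  nlinarith [mul_le_mul_of_nonneg_left hm (by positivity : (0:ℤ) ≤ (k : ℤ) + 1)]

/-- Lemma 2.2 ("Lemma lines"): if `|X| = n ≥ 3`, `|Y| ≥ n(n-1)g - n + 2`, and
`f : Y → X^(2)` assigns to each element of `Y` a 2-element subset of `X`, then there
is some `z ∈ X` such that at least `(n-1)(n-2)g - n + 3` elements of `Y` are sent to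
2-element subsets avoiding `z`. -/
theorem stmt_0 (g : ℕ) (hg : 2 ≤ g) (X Y : Type*) [Fintype X] [Fintype Y] [DecidableEq X]
    (n : ℕ) (hn : 3 ≤ n) (hX : Fintype.card X = n)
    (hY : n * (n - 1) * g - n + 2 ≤ Fintype.card Y)
    (f : Y → Finset X) (hf : ∀ y, (f y).card = 2) :
    ∃ z : X, (n - 1) * (n - 2) * g - n + 3 ≤
      (Finset.univ.filter fun y : Y => z ∉ f y).card := by
  obtain ⟨k, rfl⟩ : ∃ k, n = k + 3 := ⟨n - 3, by omega⟩
  simp only [show k + 3 - 1 = k + 2 from rfl, show k + 3 - 2 = k + 1 from rfl] at hY ⊢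
  by_contra h
  push_neg at h
  have hsum : ∑ z : X, (Finset.univ.filter fun y : Y => z ∉ f y).card
      = (k + 1) * Fintype.card Y := by
    simp_rw [Finset.card_filter]
    rw [Finset.sum_comm]
    have hy : ∀ y : Y, (∑ z : X, if z ∉ f y then 1 else 0) = k + 1 := by
      intro y
      rw [← Finset.card_filter]
      have hc : Finset.univ.filter (fun z : X => z ∉ f y) = (f y)ᶜ := by
        ext z; simp
      rw [hc, Finset.card_compl, hf, hX]; omega
    rw [Finset.sum_congr rfl (fun y _ => hy y), Finset.sum_const, smul_eq_mul,
      Finset.card_univ, mul_comm]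
  have hub : ∑ z : X, (Finset.univ.filter fun y : Y => z ∉ f y).card
      ≤ (k + 3) * ((k + 2) * (k + 1) * g - (k + 3) + 3 - 1) := by
    calc ∑ z : X, (Finset.univ.filter fun y : Y => z ∉ f y).card
        ≤ ∑ _z : X, ((k + 2) * (k + 1) * g - (k + 3) + 3 - 1) :=
          Finset.sum_le_sum (fun z _ => by have := h z; omega)
      _ = (k + 3) * ((k + 2) * (k + 1) * g - (k + 3) + 3 - 1) := by
          rw [Finset.sum_const, smul_eq_mul, Finset.card_univ, hX]
  have := arith_aux g k (Fintype.card Y) hg hY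
  omega
end

section
/- Let X be a finite set with |X| ≥ 2, let ℚ[x_{ij}] be the polynomial ring over ℚ with variables x_{ij} for ordered pairs (i,j) of distinct elements of X, and let I ⊆ ℚ[x_{ij}] be the ideal generated by all elements x_{ij} + x_{ji} and x_{ij} + x_{jk} + x_{ki} for triples of distinct elements i, j, k ∈ X. Fix z ∈ X. Then for every monomial ξ ∈ ℚ[x_{ij}] there exists a homogeneous polynomial η in the variables {x_{zj} : j ∈ X \ {z}} only, of the same degree as ξ, such that ξ − η ∈ I. -/
open MvPolynomial

noncomputable def eRepl (X : Type*) [DecidableEq X] (z : X)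
    (p : {p : X × X // p.1 ≠ p.2}) : MvPolynomial {p : X × X // p.1 ≠ p.2} ℚ :=
  if h1 : p.1.1 = z then MvPolynomial.X p
  else if h2 : p.1.2 = z then -MvPolynomial.X ⟨(z, p.1.1), Ne.symm h1⟩
  else MvPolynomial.X ⟨(z, p.1.2), Ne.symm h2⟩ - MvPolynomial.X ⟨(z, p.1.1), Ne.symm h1⟩

lemma eRepl_homog (X : Type*) [DecidableEq X] (z : X) (p) : (eRepl X z p).IsHomogeneous 1 := by
  unfold eRepl
  split_ifs with h1 h2
  · exact isHomogeneous_X _ _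
  · exact (isHomogeneous_X _ _).neg
  · exact (isHomogeneous_X _ _).sub (isHomogeneous_X _ _)

lemma eRepl_vars (X : Type*) [DecidableEq X] (z : X) (p) :
    ∀ q ∈ (eRepl X z p).vars, q.1.1 = z := by
  intro q hq
  unfold eRepl at hq
  split_ifs at hq with h1 h2
  · rw [vars_X] at hq; simp at hq; subst hq; exact h1
  · rw [vars_neg, vars_X] at hq; simp at hq; subst hq; rfl
  · have := vars_sub_subset _ hq
    rw [vars_X, vars_X] at this
    simp at this
    rcases this with h | h <;> subst h <;> rfl

def genSet (X : Type*) [DecidableEq X] : Set (MvPolynomial {p : X × X // p.1 ≠ p.2} ℚ) :=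
  ({q | ∃ (i j : X) (hij : i ≠ j),
      q = MvPolynomial.X ⟨(i, j), hij⟩ + MvPolynomial.X ⟨(j, i), hij.symm⟩} ∪
   {q | ∃ (i j k : X) (hij : i ≠ j) (hjk : j ≠ k) (hki : k ≠ i),
      q = MvPolynomial.X ⟨(i, j), hij⟩ + MvPolynomial.X ⟨(j, k), hjk⟩ +
        MvPolynomial.X ⟨(k, i), hki⟩})

lemma X_sub_eRepl_mem (X : Type*) [DecidableEq X] (z : X) (p) :
    MvPolynomial.X p - eRepl X z p ∈ Ideal.span (genSet X) := by
  unfold eRepl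
  split_ifs with h1 h2
  · simp
  · have hp : p = ⟨(p.1.1, z), fun h => h1 (h.trans rfl ▸ h2 ▸ rfl)⟩ := by
      apply Subtype.ext
      exact Prod.ext rfl h2
    have hmem : MvPolynomial.X (σ := {p : X × X // p.1 ≠ p.2}) (R := ℚ)
        ⟨(p.1.1, z), fun h => h1 h⟩ + MvPolynomial.X ⟨(z, p.1.1), Ne.symm h1⟩
        ∈ Ideal.span (genSet X) := by
      apply Ideal.subset_span
      left
      exact ⟨p.1.1, z, fun h => h1 h, rfl⟩
    rw [sub_neg_eq_add]
    convert hmem using 2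
    exact congrArg _ hp
  · -- X⟨(i,j)⟩ - (X⟨(z,j)⟩ - X⟨(z,i)⟩) = g1 - g2
    have hij : p.1.1 ≠ p.1.2 := p.2
    have g1 : MvPolynomial.X (R := ℚ) ⟨(p.1.1, p.1.2), hij⟩ +
        MvPolynomial.X ⟨(p.1.2, z), fun h => h2 h⟩ +
        MvPolynomial.X ⟨(z, p.1.1), Ne.symm h1⟩ ∈ Ideal.span (genSet X) := by
      apply Ideal.subset_span; right
      exact ⟨p.1.1, p.1.2, z, hij, fun h => h2 h, Ne.symm h1, rfl⟩
    have g2 : MvPolynomial.X (R := ℚ) ⟨(p.1.2, z), fun h => h2 h⟩ +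
        MvPolynomial.X ⟨(z, p.1.2), Ne.symm h2⟩ ∈ Ideal.span (genSet X) := by
      apply Ideal.subset_span; left
      exact ⟨p.1.2, z, fun h => h2 h, rfl⟩
    have hp : MvPolynomial.X (R := ℚ) p = MvPolynomial.X ⟨(p.1.1, p.1.2), hij⟩ := by
      congr 1
    rw [hp]
    have : MvPolynomial.X (R := ℚ) (σ := {p : X × X // p.1 ≠ p.2}) ⟨(p.1.1, p.1.2), hij⟩ -
        (MvPolynomial.X ⟨(z, p.1.2), Ne.symm h2⟩ - MvPolynomial.X ⟨(z, p.1.1), Ne.symm h1⟩)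
        = (MvPolynomial.X ⟨(p.1.1, p.1.2), hij⟩ +
            MvPolynomial.X ⟨(p.1.2, z), fun h => h2 h⟩ +
            MvPolynomial.X ⟨(z, p.1.1), Ne.symm h1⟩) -
          (MvPolynomial.X ⟨(p.1.2, z), fun h => h2 h⟩ +
            MvPolynomial.X ⟨(z, p.1.2), Ne.symm h2⟩) := by ring
    rw [this]
    exact Ideal.sub_mem _ g1 g2

lemma sub_aeval_mem (X : Type*) [DecidableEq X] (z : X)
    (f : MvPolynomial {p : X × X // p.1 ≠ p.2} ℚ) :
    f - aeval (eRepl X z) f ∈ Ideal.span (genSet X) := by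
  induction f using MvPolynomial.induction_on with
  | C a => simp
  | add f g hf hg =>
    have := Ideal.add_mem _ hf hg
    convert this using 1
    simp; ring
  | mul_X f p hf =>
    have key : f * MvPolynomial.X p - aeval (eRepl X z) (f * MvPolynomial.X p)
        = f * (MvPolynomial.X p - eRepl X z p) + (f - aeval (eRepl X z) f) * eRepl X z p := by
      simp only [map_mul, aeval_X]; ring
    rw [key]
    exact Ideal.add_mem _ (Ideal.mul_mem_left _ _ (X_sub_eRepl_mem X z p))
      (Ideal.mul_mem_right _ _ hf)

lemma aeval_eRepl_vars (X : Type*) [DecidableEq X] (z : X)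
    (d : {p : X × X // p.1 ≠ p.2} →₀ ℕ) (c : ℚ) :
    ∀ q ∈ (aeval (eRepl X z) (monomial d c)).vars, q.1.1 = z := by
  intro q hq
  rw [aeval_monomial] at hq
  have h1 := vars_mul _ _ hq
  rw [algebraMap_eq, vars_C] at h1
  simp only [Finset.empty_union] at h1
  rw [Finsupp.prod] at h1
  have h2 := vars_prod (fun p => eRepl X z p ^ d p) h1
  rw [Finset.mem_biUnion] at h2
  obtain ⟨p, _, hp⟩ := h2
  exact eRepl_vars X z p q (vars_pow _ _ hp)


/-- Lemma 3.5 ("forcerestintoline"): in the polynomial ring `ℚ[x_{ij}]` on variables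
indexed by ordered pairs of distinct elements of `X` (`|X| ≥ 2`), let `I` be the ideal
generated by `x_{ij} + x_{ji}` and `x_{ij} + x_{jk} + x_{ki}` for distinct `i, j, k`.
Fix `z ∈ X`. Then every monomial `ξ = c·x^d` is congruent modulo `I` to a homogeneous
polynomial `η` of the same degree involving only the variables `x_{zj}`, `j ∈ X \ {z}`. -/
theorem stmt_5 (X : Type*) [Fintype X] [DecidableEq X] (hX : 2 ≤ Fintype.card X) (z : X)
    (d : {p : X × X // p.1 ≠ p.2} →₀ ℕ) (c : ℚ) :
    ∃ η : MvPolynomial {p : X × X // p.1 ≠ p.2} ℚ,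
      η.IsHomogeneous (d.sum fun _ k => k) ∧
      (∀ p ∈ η.vars, p.1.1 = z) ∧
      MvPolynomial.monomial d c - η ∈
        Ideal.span
          ({q | ∃ (i j : X) (hij : i ≠ j),
              q = MvPolynomial.X ⟨(i, j), hij⟩ + MvPolynomial.X ⟨(j, i), hij.symm⟩} ∪
           {q | ∃ (i j k : X) (hij : i ≠ j) (hjk : j ≠ k) (hki : k ≠ i),
              q = MvPolynomial.X ⟨(i, j), hij⟩ + MvPolynomial.X ⟨(j, k), hjk⟩ +
                MvPolynomial.X ⟨(k, i), hki⟩} :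
            Set (MvPolynomial {p : X × X // p.1 ≠ p.2} ℚ)) := by
  refine ⟨aeval (eRepl X z) (monomial d c), ?_, aeval_eRepl_vars X z d c,
    sub_aeval_mem X z _⟩
  have hm : (monomial d c).IsHomogeneous (d.sum fun _ k => k) :=
    isHomogeneous_monomial c rfl
  have := hm.aeval (eRepl X z) (eRepl_homog X z)
  rwa [one_mul] at this
end

section
/- Let g ≥ 1 and N ≥ 2 be integers. Let t_1, …, t_N ∈ (0,1) be real numbers such that t_1 + ⋯ + t_N ∈ ℤ but the sum of any proper nonempty subset of the t_j is not an integer, and let t = Diag(e^{2πi t_1}, …, e^{2πi t_N}) ∈ SU(N). Let V be a proper nonempty subset of {1,…,N}. Then there do NOT exist matrices A_1, …, A_g, B_1, …, B_g ∈ SU(N) satisfying both: (1) (A_m)_{ij} = 0 and (B_m)_{ij} = 0 for all m ∈ {1,…,g} and all (i,j) ∈ V × ({1,…,N} \ V); and (2) ∏_{m=1}^{g} [A_m, B_m] = t, where [A,B] = ABA^{-1}B^{-1}. -/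
/-!
The vanishing of the `V × Vᶜ` entries says that every `A_m`, `B_m` is block triangular for the
splitting `V ⊔ Vᶜ`. On invertible block triangular matrices, taking the determinant of a
diagonal block is multiplicative and sends `M⁻¹` to the inverse, so it is a homomorphism to the
abelian group `ℂˣ` and kills every commutator. Applied to `∏ [A_m, B_m] = t`, the determinant
of the `Vᶜ` block of `t`, namely `exp (2πi ∑_{j ∉ V} t_j)`, must be `1`, so `∑_{j ∉ V} t_j` is
an integer, contradicting genericity.
-/

open Matrix Complex Real

namespace Matrix

theorem blockTriangular_prop_iff {m R : Type*} [Zero R] {M : Matrix m m R} {p : m → Prop} :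
    M.BlockTriangular p ↔ ∀ i, p i → ∀ j, ¬p j → M i j = 0 := by
  refine ⟨fun h i hi j hj => h (by simp [lt_iff_le_not_ge, hi, hj]), fun h i j hij => ?_⟩
  obtain ⟨hi, hj⟩ := Classical.not_imp.mp (lt_iff_le_not_ge.mp hij).2
  exact h i hi j hj

variable {m α R : Type*} [Fintype m] [LinearOrder α] [CommRing R] {b : m → α}

theorem BlockTriangular.toBlock_mul {M N : Matrix m m R} (hN : N.BlockTriangular b) (k : α) :
    (M * N).toBlock (fun i => b i < k) (fun i => b i < k) =
      M.toBlock (fun i => b i < k) (fun i => b i < k) *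
        N.toBlock (fun i => b i < k) (fun i => b i < k) := by
  have h_zero : N.toBlock (fun i => ¬b i < k) (fun i => b i < k) = 0 := by
    ext i j
    exact hN (j.2.trans_le (not_lt.mp i.2))
  rw [toBlock_mul_eq_add _ (fun i => b i < k), h_zero, Matrix.mul_zero, add_zero]

variable [DecidableEq m]

theorem BlockTriangular.inv {A : Matrix m m R} (hA : A.BlockTriangular b) :
    A⁻¹.BlockTriangular b := by
  by_cases hAu : IsUnit A.det
  · have := invertibleOfIsUnitDet A hAu
    exact blockTriangular_inv_of_blockTriangular hA
  · rw [nonsing_inv_apply_not_isUnit A hAu]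
    exact blockTriangular_zero

theorem BlockTriangular.det_toBlock_commutator {A B : Matrix m m R}
    (hA : A.BlockTriangular b) (hB : B.BlockTriangular b) (hAu : IsUnit A.det) (hBu : IsUnit B.det)
    (k : α) :
    ((A * B * A⁻¹ * B⁻¹).toBlock (fun i => b i < k) (fun i => b i < k)).det = 1 := by
  have := invertibleOfIsUnitDet A hAu
  have := invertibleOfIsUnitDet B hBu
  have hAinv := congrArg det (hA.toBlock_inverse_mul_toBlock_eq_one k)
  have hBinv := congrArg det (hB.toBlock_inverse_mul_toBlock_eq_one k)
  rw [det_mul, det_one] at hAinv hBinv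
  rw [toBlock_mul hB.inv, toBlock_mul hA.inv, toBlock_mul hB,
    det_mul, det_mul, det_mul]
  set p : m → Prop := fun i => b i < k
  linear_combination ((B⁻¹.toBlock p p).det * (B.toBlock p p).det) * hAinv + hBinv

theorem BlockTriangular.det_toBlock_list_prod {l : List (Matrix m m R)} (k : α)
    (h : ∀ M ∈ l, M.BlockTriangular b ∧
      (M.toBlock (fun i => b i < k) (fun i => b i < k)).det = 1) :
    (l.prod.toBlock (fun i => b i < k) (fun i => b i < k)).det = 1 := by
  refine (List.prod_induction (fun M : Matrix m m R => M.BlockTriangular b ∧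
      (M.toBlock (fun i => b i < k) (fun i => b i < k)).det = 1) ?_ ?_ h).2
  · rintro M N ⟨hM, hMdet⟩ ⟨hN, hNdet⟩
    exact ⟨hM.mul hN, by rw [hN.toBlock_mul, det_mul, hMdet, hNdet, one_mul]⟩
  · exact ⟨blockTriangular_one, by rw [toBlock_one_self, det_one]⟩

theorem det_toBlock_diagonal (d : m → R) (p : m → Prop) [DecidablePred p] (s : Finset m)
    (hs : ∀ i, i ∈ s ↔ p i) :
    ((diagonal d).toBlock p p).det = ∏ i ∈ s, d i := by
  rw [toBlock_diagonal_self, det_diagonal, Finset.prod_subtype s hs]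

end Matrix

theorem exists_int_eq_of_cexp_two_pi_I_mul_eq_one {x : ℝ} (h : exp (2 * π * I * x) = 1) :
    ∃ n : ℤ, x = n := by
  obtain ⟨n, hn⟩ := Complex.exp_eq_one_iff.mp h
  refine ⟨n, ?_⟩
  have h2pi : (2 * π * I : ℂ) ≠ 0 := by simp [pi_ne_zero]
  exact_mod_cast mul_left_cancel₀ h2pi (hn.trans (mul_comm _ _))

theorem stmt_7_general (g N : ℕ) (t : Fin N → ℝ)
    (htgen : ∀ S : Finset (Fin N), S.Nonempty → S ≠ Finset.univ →
      ∀ k : ℤ, ∑ j ∈ S, t j ≠ k)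
    (V : Finset (Fin N)) (hV1 : V.Nonempty) (hV2 : V ≠ Finset.univ) :
    ¬ ∃ A B : Fin g → Matrix (Fin N) (Fin N) ℂ,
      (∀ m, A m ∈ Matrix.specialUnitaryGroup (Fin N) ℂ ∧
        B m ∈ Matrix.specialUnitaryGroup (Fin N) ℂ) ∧
      (∀ m, ∀ i ∈ V, ∀ j ∉ V, A m i j = 0 ∧ B m i j = 0) ∧
      ((List.finRange g).map fun m => A m * B m * (A m)⁻¹ * (B m)⁻¹).prod =
        Matrix.diagonal (fun j => Complex.exp (2 * Real.pi * Complex.I * (t j))) := by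
  rintro ⟨A, B, hSU, hzero, hprod⟩
  have hunit {M : Matrix (Fin N) (Fin N) ℂ} (hM : M ∈ specialUnitaryGroup (Fin N) ℂ) :
      IsUnit M.det := (mem_specialUnitaryGroup_iff.mp hM).2 ▸ isUnit_one
  have hA m : (A m).BlockTriangular (· ∈ V) :=
    blockTriangular_prop_iff.mpr fun i hi j hj => (hzero m i hi j hj).1
  have hB m : (B m).BlockTriangular (· ∈ V) :=
    blockTriangular_prop_iff.mpr fun i hi j hj => (hzero m i hi j hj).2
  have hdet := hprod ▸ BlockTriangular.det_toBlock_list_prod True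
    (List.forall_mem_map.mpr fun m _ => ⟨(((hA m).mul (hB m)).mul (hA m).inv).mul (hB m).inv,
      (hA m).det_toBlock_commutator (hB m) (hunit (hSU m).1) (hunit (hSU m).2) True⟩)
  -- For `b = (· ∈ V)` and `k = True`, the block `b i < k` is the `Vᶜ` block.
  rw [det_toBlock_diagonal _ _ Vᶜ (by simp [lt_iff_le_not_ge]), ← Complex.exp_sum,
    ← Finset.mul_sum, ← Complex.ofReal_sum] at hdet
  obtain ⟨n, hn⟩ := exists_int_eq_of_cexp_two_pi_I_mul_eq_one hdet
  exact htgen Vᶜ (by simpa [Finset.nonempty_iff_ne_empty] using hV2)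
    ((Finset.compl_ne_univ_iff_nonempty V).mpr hV1) n hn

/-- The emptiness statement in the proof of Lemma 4.3 ("vanishing"): let `t` be a
generic diagonal element of `SU(N)` given by `t = Diag(e^{2πi t_1}, …, e^{2πi t_N})`
with all `t_j ∈ (0,1)`, `∑ t_j ∈ ℤ`, and no proper nonempty subset of the `t_j`
summing to an integer. Then for any proper nonempty subset `V ⊆ {1,…,N}` there are no
matrices `A_1, …, A_g, B_1, …, B_g ∈ SU(N)` all of whose entries indexed by
`V × ({1,…,N} \ V)` vanish and with `∏_m [A_m, B_m] = t` (the product of commutators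
taken in order, `[A,B] = A B A⁻¹ B⁻¹`). -/
theorem stmt_7 (g N : ℕ) (hg : 1 ≤ g) (hN : 2 ≤ N)
    (t : Fin N → ℝ) (ht0 : ∀ j, t j ∈ Set.Ioo (0 : ℝ) 1)
    (htZ : ∃ k : ℤ, ∑ j, t j = k)
    (htgen : ∀ S : Finset (Fin N), S.Nonempty → S ≠ Finset.univ →
      ∀ k : ℤ, ∑ j ∈ S, t j ≠ k)
    (V : Finset (Fin N)) (hV1 : V.Nonempty) (hV2 : V ≠ Finset.univ) :
    ¬ ∃ A B : Fin g → Matrix (Fin N) (Fin N) ℂ,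
      (∀ m, A m ∈ Matrix.specialUnitaryGroup (Fin N) ℂ ∧
        B m ∈ Matrix.specialUnitaryGroup (Fin N) ℂ) ∧
      (∀ m, ∀ i ∈ V, ∀ j ∉ V, A m i j = 0 ∧ B m i j = 0) ∧
      ((List.finRange g).map fun m => A m * B m * (A m)⁻¹ * (B m)⁻¹).prod =
        Matrix.diagonal (fun j => Complex.exp (2 * Real.pi * Complex.I * (t j))) :=
  stmt_7_general g N t htgen V hV1 hV2
end
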